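/- Let 1 → A → S → G → 1 be a central extension, F ⊆ K fields, α ∈ Z^2(S,F^*) inflated from α' ∈ Z^2(G,F^*), σ ∈ Z^2(G,A) a cocycle of the extension with associated section G → S, and χ : A → K^* a homomorphism. Then the F-linear map ψ_χ : F^α S → F(χ)^{α_χ} G sending u_{ag} ↦ χ(a)·v_g (for a ∈ A, g ∈ G) is a surjective ring homomorphism. -/

import Mathlib

/-!
Write `x ∈ S` as `ι (b x) * s (π x)`; then `ψ` is `u x ↦ χ (b x) • v (π x)`. It is multiplicative
because `b (x * y) = b x * b y * σ (π x) (π y)` turns `α` into `α_χ`. Translating by `ι a` in `S`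
shows that the image of `ψ` is stable under multiplication by `χ a`, hence by `F[χ]`, which is
`F(χ)` because the values of `χ` are roots of unity; as the image also contains every `v g`, `ψ` is
onto, and surjectivity forces `ψ 1 = 1`.
-/

open IntermediateField

/-- A (trivial-action) multiplicative 2-cocycle. -/
def IsTwoCocycle' {G M : Type*} [Group G] [CommMonoid M] (α : G → G → M) : Prop :=
  ∀ g h k : G, α g h * α (g * h) k = α h k * α g (h * k)

section CentralExtension

variable {A S G : Type*} [CommGroup A] [Group S] [Group G] {ι : A →* S} {π : S →* G}
  {s : G → S}

theorem map_mul_section (hexact : π.ker = ι.range) (hs : ∀ g, π (s g) = g) (a : A) (g : G) :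
    π (ι a * s g) = g := by
  have hπι : π (ι a) = 1 := by
    rw [← MonoidHom.mem_ker, hexact]
    exact ⟨a, rfl⟩
  rw [map_mul, hπι, one_mul, hs]

theorem exists_eq_mul_section (hexact : π.ker = ι.range) (hs : ∀ g, π (s g) = g) (x : S) :
    ∃ a, x = ι a * s (π x) := by
  have hx : x * (s (π x))⁻¹ ∈ ι.range := by
    rw [← hexact, MonoidHom.mem_ker, map_mul, map_inv, hs, mul_inv_cancel]
  obtain ⟨a, ha⟩ := hx
  exact ⟨a, by rw [ha, inv_mul_cancel_right]⟩

variable {b : S → A}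

theorem coord_mul_section (hι : Function.Injective ι) (hexact : π.ker = ι.range)
    (hs : ∀ g, π (s g) = g) (hb : ∀ x, x = ι (b x) * s (π x)) (a : A) (g : G) :
    b (ι a * s g) = a := by
  have h := hb (ι a * s g)
  rw [map_mul_section hexact hs] at h
  exact hι (mul_right_cancel h).symm

theorem coord_mul (hι : Function.Injective ι) (hcentral : ∀ a : A, ι a ∈ Subgroup.center S)
    {σ : G → G → A} (hσ : ∀ g h, s g * s h = ι (σ g h) * s (g * h))
    (hb : ∀ x, x = ι (b x) * s (π x)) (x y : S) :
    b (x * y) = b x * b y * σ (π x) (π y) := by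
  apply hι
  apply mul_right_cancel (b := s (π (x * y)))
  calc ι (b (x * y)) * s (π (x * y))
      = ι (b x) * s (π x) * (ι (b y) * s (π y)) := by rw [← hb, ← hb, ← hb]
    _ = ι (b x) * ι (b y) * (s (π x) * s (π y)) := by
        rw [mul_assoc, ← mul_assoc (s _), Subgroup.mem_center_iff.mp (hcentral _)]
        simp only [mul_assoc]
    _ = ι (b x * b y * σ (π x) (π y)) * s (π (x * y)) := by
        rw [hσ, map_mul π, map_mul, map_mul, mul_assoc (ι _ * ι _)]

end CentralExtension

theorem IntermediateField.exists_monoidHom_eq {F K A : Type*} [Field F] [Field K] [Algebra F K]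
    [MulOneClass A] (L : IntermediateField F K) (χ : A →* K) (f : A → L)
    (hf : ∀ a, (f a : K) = χ a) : ∃ φ : A →* L, ⇑φ = f :=
  ⟨{ toFun := f
     map_one' := Subtype.ext (by simp [hf])
     map_mul' := fun a a' => Subtype.ext (by simp [hf]) }, rfl⟩

theorem IntermediateField.algebra_adjoin_range_eq_top {F K A : Type*} [Field F] [Field K]
    [Algebra F K] [Group A] [Finite A] (L : IntermediateField F K) (χ : A →* L)
    (hL : L = adjoin F (Set.range fun a => (χ a : K))) :
    Algebra.adjoin F (Set.range χ) = ⊤ := by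
  have halg : ∀ x ∈ Set.range χ, IsAlgebraic F x := by
    rintro _ ⟨a, rfl⟩
    refine (IsIntegral.of_pow (Nat.card_pos (α := A)) ?_).isAlgebraic
    rw [← map_pow, pow_card_eq_one', map_one]
    exact isIntegral_one
  rw [← adjoin_eq_top_iff_of_isAlgebraic halg]
  apply lift_injective L
  rw [lift_adjoin, lift_top, ← Set.range_comp]
  exact hL.symm

theorem LinearMap.map_mul_of_basis {F T B ι : Type*} [CommSemiring F] [Semiring T] [Algebra F T]
    [Semiring B] [Algebra F B] (u : Module.Basis ι F T) (φ : T →ₗ[F] B)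
    (h : ∀ i j, φ (u i * u j) = φ (u i) * φ (u j)) (x y : T) : φ (x * y) = φ x * φ y := by
  have key : (LinearMap.mul F T).compr₂ φ = (LinearMap.mul F B).compl₁₂ φ φ :=
    LinearMap.ext_basis u u (by simpa using h)
  simpa using LinearMap.congr_fun₂ key x y

theorem map_one_of_surjective {T B : Type*} [MulOneClass T] [MulOneClass B] {φ : T → B}
    (hφ : Function.Surjective φ) (hmul : ∀ x y, φ (x * y) = φ x * φ y) : φ 1 = 1 := by
  obtain ⟨t, ht⟩ := hφ 1
  calc φ 1 = φ 1 * φ t := by rw [ht, mul_one]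
    _ = 1 := by rw [← hmul, one_mul, ht]

section SmulRange

variable {F L T B ι : Type*} [CommSemiring F] [CommSemiring L] [Algebra F L]
  [AddCommMonoid T] [Module F T] [AddCommMonoid B] [Module F B] [Module L B]
  [IsScalarTower F L B]

theorem LinearMap.smul_mem_range_of_basis (φ : T →ₗ[F] B) (u : Module.Basis ι F T) {l : L}
    (hl : ∀ i, l • φ (u i) ∈ LinearMap.range φ) {y : B} (hy : y ∈ LinearMap.range φ) :
    l • y ∈ LinearMap.range φ := by
  obtain ⟨t, rfl⟩ := hy
  have ht : t ∈ Submodule.span F (Set.range u) := u.span_eq ▸ Submodule.mem_top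
  induction ht using Submodule.span_induction with
  | mem _ ht =>
    obtain ⟨i, rfl⟩ := ht
    exact hl i
  | zero => simp
  | add _ _ _ _ h₁ h₂ =>
    rw [map_add, smul_add]
    exact add_mem h₁ h₂
  | smul k _ _ h =>
    rw [map_smul, smul_comm]
    exact Submodule.smul_mem _ k h

theorem LinearMap.smul_mem_range_of_mem_adjoin (φ : T →ₗ[F] B) {X : Set L}
    (hX : ∀ x ∈ X, ∀ y ∈ LinearMap.range φ, x • y ∈ LinearMap.range φ) {l : L}
    (hl : l ∈ Algebra.adjoin F X) {y : B} (hy : y ∈ LinearMap.range φ) :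
    l • y ∈ LinearMap.range φ := by
  induction hl using Algebra.adjoin_induction generalizing y with
  | mem x hx => exact hX x hx y hy
  | algebraMap k =>
    rw [algebraMap_smul]
    exact Submodule.smul_mem _ k hy
  | add _ _ _ _ h₁ h₂ =>
    rw [add_smul]
    exact add_mem (h₁ hy) (h₂ hy)
  | mul _ _ _ _ h₁ h₂ =>
    rw [mul_smul]
    exact h₁ (h₂ hy)

theorem LinearMap.surjective_of_smul_mem_range {κ : Type*} (φ : T →ₗ[F] B)
    (u : Module.Basis ι F T) (v : Module.Basis κ L B) {X : Set L}
    (hX : Algebra.adjoin F X = ⊤) (hv : ∀ k, v k ∈ LinearMap.range φ)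
    (hXu : ∀ x ∈ X, ∀ i, x • φ (u i) ∈ LinearMap.range φ) : Function.Surjective φ := by
  have hsmul (l : L) {y : B} (hy : y ∈ LinearMap.range φ) : l • y ∈ LinearMap.range φ :=
    φ.smul_mem_range_of_mem_adjoin (fun x hx _ => φ.smul_mem_range_of_basis u (hXu x hx))
      (hX ▸ Algebra.mem_top) hy
  intro y
  have hy : y ∈ Submodule.span L (Set.range v) := v.span_eq ▸ Submodule.mem_top
  rw [← LinearMap.mem_range]
  induction hy using Submodule.span_induction with
  | mem _ hy =>
    obtain ⟨k, rfl⟩ := hy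
    exact hv k
  | zero => exact zero_mem _
  | add _ _ _ _ h₁ h₂ => exact add_mem h₁ h₂
  | smul l _ _ h => exact hsmul l h

end SmulRange

theorem stmt_16_general (A S G : Type*) [CommGroup A] [Group S] [Group G]
    [Fintype A]
    (ι : A →* S) (hι : Function.Injective ι)
    (hcentral : ∀ a : A, ι a ∈ Subgroup.center S)
    (π : S →* G) (hexact : π.ker = ι.range)
    (s : G → S) (hs : ∀ g, π (s g) = g)
    (σ : G → G → A) (hσ : ∀ g h, s g * s h = ι (σ g h) * s (g * h))
    (F K : Type*) [Field F] [Field K] [Algebra F K]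
    (α' : G → G → Fˣ)
    (α : S → S → Fˣ) (hinfl : ∀ x y : S, α x y = α' (π x) (π y))
    (χ : A →* Kˣ)
    (L : IntermediateField F K)
    (hL : L = IntermediateField.adjoin F (Set.range fun a : A => ((χ a : Kˣ) : K)))
    (χL : A → L) (hχL : ∀ a : A, (χL a : K) = ((χ a : Kˣ) : K))
    (c : G → G → L) (hc : ∀ g h : G,
      ((c g h : K)) = algebraMap F K ((α' g h : Fˣ) : F) * ((χ (σ g h) : Kˣ) : K))
    (T : Type*) [Ring T] [Algebra F T] (u : Module.Basis S F T)
    (hu : ∀ x y : S, u x * u y = ((α x y : Fˣ) : F) • u (x * y))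
    (B : Type*) [Ring B] [Algebra L B] [Algebra F B] [IsScalarTower F L B]
    (v : Module.Basis G L B)
    (hv : ∀ g h : G, v g * v h = c g h • v (g * h)) :
    ∃ ψ : T →+* B, Function.Surjective ψ ∧
      (∀ (k : F) (t : T), ψ (k • t) = k • ψ t) ∧
      (∀ (a : A) (g : G), ψ (u (ι a * s g)) = χL a • v g) := by
  obtain ⟨χL, rfl⟩ := L.exists_monoidHom_eq ((Units.coeHom K).comp χ) χL hχL
  choose b hb using exists_eq_mul_section hexact hs
  have hcoord := coord_mul_section hι hexact hs hb
  have hkey (x y : S) :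
      ((α x y : Fˣ) : F) • χL (b (x * y)) = χL (b x) * χL (b y) * c (π x) (π y) := by
    apply Subtype.ext
    simp only [coord_mul hι hcentral hσ hb, map_mul, IntermediateField.coe_algebraMap_apply,
      IntermediateField.coe_mul, hχL, hc, hinfl, Algebra.smul_def]
    ring
  set ψ := u.constr F fun x => χL (b x) • v (π x)
  have hψu (x : S) : ψ (u x) = χL (b x) • v (π x) := u.constr_basis F _ x
  have hψ_section (a : A) (g : G) : ψ (u (ι a * s g)) = χL a • v g := by
    rw [hψu, hcoord, map_mul_section hexact hs]
  have hmul : ∀ t t', ψ (t * t') = ψ t * ψ t' := ψ.map_mul_of_basis u fun x y => by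
    rw [hu, map_smul, hψu, hψu, hψu, smul_mul_smul_comm, hv, map_mul π, smul_smul,
      ← smul_assoc, hkey]
  have hsurj : Function.Surjective ψ := by
    refine ψ.surjective_of_smul_mem_range u v
      (L.algebra_adjoin_range_eq_top χL (by simp_rw [hχL]; exact hL))
      (fun g => ⟨u (s g), by simpa using hψ_section 1 g⟩) ?_
    rintro _ ⟨a, rfl⟩ x
    exact ⟨u (ι (a * b x) * s (π x)), by rw [hψ_section, map_mul, mul_smul, hψu]⟩
  let Ψ := AlgHom.ofLinearMap ψ (map_one_of_surjective hsurj hmul) hmul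
  exact ⟨Ψ, hsurj, map_smul Ψ, hψ_section⟩

/-- Let `1 → A → S → G → 1` be a central extension, `F ⊆ K` fields, `α ∈ Z²(S,Fˣ)` inflated
from `α' ∈ Z²(G,Fˣ)`, `σ ∈ Z²(G,A)` a cocycle of the extension with associated section
`s : G → S`, and `χ : A → Kˣ` a homomorphism with values generating `F(χ) ⊆ K`.  Then the
`F`-linear map `ψ_χ : F^α S → F(χ)^{α_χ} G` sending `u_{ι(a)·s(g)} ↦ χ(a) • v_g` is a
surjective ring homomorphism, where `α_χ(g,h) = α'(g,h)·χ(σ(g,h))`. -/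
theorem stmt_16 (A S G : Type*) [CommGroup A] [Group S] [Group G]
    [Fintype A] [Fintype S] [Fintype G]
    (ι : A →* S) (hι : Function.Injective ι)
    (hcentral : ∀ a : A, ι a ∈ Subgroup.center S)
    (π : S →* G) (hπ : Function.Surjective π) (hexact : π.ker = ι.range)
    (s : G → S) (hs : ∀ g, π (s g) = g)
    (σ : G → G → A) (hσ : ∀ g h, s g * s h = ι (σ g h) * s (g * h))
    (F K : Type*) [Field F] [Field K] [Algebra F K]
    (α' : G → G → Fˣ) (hα' : IsTwoCocycle' α')
    (α : S → S → Fˣ) (hinfl : ∀ x y : S, α x y = α' (π x) (π y))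
    (χ : A →* Kˣ)
    (L : IntermediateField F K)
    (hL : L = IntermediateField.adjoin F (Set.range fun a : A => ((χ a : Kˣ) : K)))
    (χL : A → L) (hχL : ∀ a : A, (χL a : K) = ((χ a : Kˣ) : K))
    (c : G → G → L) (hc : ∀ g h : G,
      ((c g h : K)) = algebraMap F K ((α' g h : Fˣ) : F) * ((χ (σ g h) : Kˣ) : K))
    (T : Type*) [Ring T] [Algebra F T] (u : Module.Basis S F T)
    (hu : ∀ x y : S, u x * u y = ((α x y : Fˣ) : F) • u (x * y))
    (B : Type*) [Ring B] [Algebra L B] [Algebra F B] [IsScalarTower F L B]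
    (v : Module.Basis G L B)
    (hv : ∀ g h : G, v g * v h = c g h • v (g * h)) :
    ∃ ψ : T →+* B, Function.Surjective ψ ∧
      (∀ (k : F) (t : T), ψ (k • t) = k • ψ t) ∧
      (∀ (a : A) (g : G), ψ (u (ι a * s g)) = χL a • v g) :=
  stmt_16_general A S G ι hι hcentral π hexact s hs σ hσ F K α' α hinfl χ L hL χL hχL c hc T u hu B
    v hv
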